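/- arXiv:2111.02824 — 2 statements merged into one kernel-verified Lean document; each statement's English description precedes it below -/
import Mathlib

section
/- An LFSA S is strongly initial-state opaque with respect to Q_S if and only if (Q0 ≠ ∅ implies Q0 ⊄ Q_S) and for every q0 ∈ Q0 ∩ Q_S, all states reachable in CC(S_ε, S_dss_obs^ε) from (q0, q_{0,dss,obs}) have nonempty right component, where q_{0,dss,obs} is the initial state of the observer of the secret-deleted automaton S_dss. -/
/-- A labeled finite-state automaton (LFSA): transition relation `δ`,
initial states `Q0`, labeling `lab` (where `none` stands for ε, i.e. unobservable). -/
structure LFSA (Q : Type*) (E : Type*) (A : Type*) where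
  δ : Q → E → Q → Prop
  Q0 : Set Q
  lab : E → Option A

namespace LFSA

variable {Q Q1 Q2 E A : Type*}

/-- A run `q →s q'` over a finite event sequence. -/
inductive Run (S : LFSA Q E A) : Q → List E → Q → Prop
  | nil (q : Q) : Run S q [] q
  | cons {q q' q'' : Q} {e : E} {s : List E} :
      S.δ q e q' → Run S q' s q'' → Run S q (e :: s) q''

/-- Output (label sequence) of an event sequence. -/
def out (S : LFSA Q E A) (s : List E) : List A := s.filterMap S.lab

/-- Generated finite language. -/
def L (S : LFSA Q E A) : Set (List E) := {s | ∃ q0 ∈ S.Q0, ∃ q, S.Run q0 s q}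

/-- Current-state estimate after observing `σ`. -/
def M (S : LFSA Q E A) (σ : List A) : Set Q :=
  {q | ∃ q0 ∈ S.Q0, ∃ s : List E, S.out s = σ ∧ S.Run q0 s q}

/-- Reachability via a nonempty event sequence. -/
def ReachPlus (S : LFSA Q E A) (q q' : Q) : Prop := ∃ s : List E, s ≠ [] ∧ S.Run q s q'

/-- There is a transition cycle reachable from `q` (a cycle at `q` itself counts). -/
def CycleReachableFrom (S : LFSA Q E A) (q : Q) : Prop :=
  ∃ p : Q, (p = q ∨ S.ReachPlus q p) ∧ ∃ s : List E, s ≠ [] ∧ S.Run p s p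

/-- `*`-strong detectability. -/
def StarSD (S : LFSA Q E A) : Prop :=
  ∃ k : ℕ, 0 < k ∧ ∀ s ∈ S.L, ∀ σ : List A, σ <+: S.out s → k < σ.length →
    ∃ q : Q, S.M σ = {q}

/-- ω-strong detectability. -/
def OmegaSD (S : LFSA Q E A) : Prop :=
  ∃ k : ℕ, 0 < k ∧ ∀ (s : ℕ → E) (ρ : ℕ → Q), ρ 0 ∈ S.Q0 →
    (∀ n : ℕ, S.δ (ρ n) (s n) (ρ (n + 1))) →
    ∀ (n : ℕ) (σ : List A), σ <+: S.out (List.ofFn (fun i : Fin n => s i)) →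
      k < σ.length → ∃ q : Q, S.M σ = {q}

/-- Concurrent composition: observable transitions with equal labels synchronize,
unobservable transitions interleave. Events are pairs over `Option E` (`none` = ε). -/
def CC (S1 : LFSA Q1 E A) (S2 : LFSA Q2 E A) :
    LFSA (Q1 × Q2) (Option E × Option E) A where
  δ p ev p' :=
    match ev with
    | (some e, some e') =>
        (∃ a : A, S1.lab e = some a ∧ S2.lab e' = some a) ∧
          S1.δ p.1 e p'.1 ∧ S2.δ p.2 e' p'.2
    | (some e, none) => S1.lab e = none ∧ S1.δ p.1 e p'.1 ∧ p.2 = p'.2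
    | (none, some e') => S2.lab e' = none ∧ p.1 = p'.1 ∧ S2.δ p.2 e' p'.2
    | (none, none) => False
  Q0 := {p | p.1 ∈ S1.Q0 ∧ p.2 ∈ S2.Q0}
  lab ev := ev.1.bind S1.lab

/-- Left projection of an event sequence of a concurrent composition. -/
def lproj (s : List (Option E × Option E)) : List E := s.filterMap Prod.fst

/-- Right projection of an event sequence of a concurrent composition. -/
def rproj (s : List (Option E × Option E)) : List E := s.filterMap Prod.snd

/-- Unobservable reach of a set of states. -/
def UR (S : LFSA Q E A) (X : Set Q) : Set Q :=
  {q | ∃ q0 ∈ X, ∃ s : List E, S.out s = [] ∧ S.Run q0 s q}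

/-- One step of the observer (powerset construction). -/
def obsStep (S : LFSA Q E A) (x : Set Q) (a : A) : Set Q :=
  {q' | ∃ q ∈ x, ∃ (e : E) (p : Q), S.lab e = some a ∧ S.δ q e p ∧ q' ∈ S.UR {p}}

/-- Observer run (deterministic). -/
def obsRun (S : LFSA Q E A) (x : Set Q) (σ : List A) : Set Q := σ.foldl S.obsStep x

/-- The concurrent composition `CC(S_ε, Obs^ε)` of `S` (with events relabeled by their
labels) and a deterministic observer with step function `ostep` and initial state `x0`:
observable transitions move both components, unobservable ones move only the left one. -/
def CCObs (S : LFSA Q E A) (ostep : Set Q → A → Set Q) (x0 : Set Q) :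
    LFSA (Q × Set Q) E A where
  δ p e p' := S.δ p.1 e p'.1 ∧
    (∀ a : A, S.lab e = some a → p'.2 = ostep p.2 a) ∧
    (S.lab e = none → p'.2 = p.2)
  Q0 := {p | p.1 ∈ S.Q0 ∧ p.2 = x0}
  lab := S.lab

/-- A state is reachable if it is an initial state or reachable from one. -/
def Reachable (S : LFSA Q E A) (q : Q) : Prop := ∃ q0 ∈ S.Q0, ∃ s : List E, S.Run q0 s q

/-- Restriction of an automaton to a set of allowed states. -/
def restrict (S : LFSA Q E A) (P : Set Q) : LFSA Q E A where
  δ q e q' := S.δ q e q' ∧ q ∈ P ∧ q' ∈ P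
  Q0 := S.Q0 ∩ P
  lab := S.lab

/-- A run all of whose states (including endpoints) lie in `P`. -/
inductive RunIn (S : LFSA Q E A) (P : Set Q) : Q → List E → Q → Prop
  | nil (q : Q) : q ∈ P → RunIn S P q [] q
  | cons {q q' q'' : Q} {e : E} {s : List E} :
      q ∈ P → S.δ q e q' → RunIn S P q' s q'' → RunIn S P q (e :: s) q''

/-- Normal subautomaton: all faulty transitions removed. -/
def Sn (S : LFSA Q E A) (Ef : Set E) : LFSA Q E A where
  δ q e q' := S.δ q e q' ∧ e ∉ Ef
  Q0 := S.Q0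
  lab := S.lab

/-- Faulty subautomaton: faulty transitions together with all their
predecessor and successor transitions. -/
def Sf (S : LFSA Q E A) (Ef : Set E) : LFSA Q E A where
  δ q e q' := S.δ q e q' ∧ ∃ c f d, f ∈ Ef ∧ S.δ c f d ∧
      ((q = c ∧ e = f ∧ q' = d) ∨ (c = q' ∨ S.ReachPlus q' c) ∨ (q = d ∨ S.ReachPlus d q))
  Q0 := S.Q0
  lab := S.lab

/-- `s` ends with a faulty event. -/
def EndsFaulty (Ef : Set E) (s : List E) : Prop := ∃ (t : List E) (e : E), e ∈ Ef ∧ s = t ++ [e]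

/-- `E_f`-diagnosability. -/
def Diag (S : LFSA Q E A) (Ef : Set E) : Prop :=
  ∃ k : ℕ, ∀ s ∈ S.L, EndsFaulty Ef s → ∀ s' : List E, s ++ s' ∈ S.L → k < s'.length →
    ∀ s'' ∈ S.L, S.out s'' = S.out (s ++ s') → ∃ e ∈ Ef, e ∈ s''

/-- `E_f`-predictability. -/
def Pred (S : LFSA Q E A) (Ef : Set E) : Prop :=
  ∃ k : ℕ, ∀ s ∈ S.L, EndsFaulty Ef s →
    ∃ s' : List E, s' <+: s ∧ (∀ e ∈ s', e ∉ Ef) ∧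
      ∀ u v : List E, u ++ v ∈ S.L → S.out s' = S.out u → (∀ e ∈ u, e ∉ Ef) →
        k < v.length → ∃ e ∈ Ef, e ∈ v

/-- Current-state opacity. -/
def CSO (S : LFSA Q E A) (QS : Set Q) : Prop :=
  ∀ q0 ∈ S.Q0, ∀ (s : List E) (q : Q), S.Run q0 s q → q ∈ QS →
    ∃ q0' ∈ S.Q0, ∃ (s' : List E) (q' : Q), S.Run q0' s' q' ∧ q' ∉ QS ∧ S.out s = S.out s'

/-- Initial-state opacity. -/
def ISO (S : LFSA Q E A) (QS : Set Q) : Prop :=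
  ∀ q0 ∈ S.Q0 ∩ QS, ∀ (s : List E) (q : Q), S.Run q0 s q →
    ∃ q0' ∈ S.Q0 \ QS, ∃ (s' : List E) (q' : Q), S.Run q0' s' q' ∧ S.out s = S.out s'

/-- Infinite-step opacity. -/
def InfSO (S : LFSA Q E A) (QS : Set Q) : Prop :=
  ∀ q0 ∈ S.Q0, ∀ (s1 : List E) (q1 : Q) (s2 : List E) (q2 : Q),
    S.Run q0 s1 q1 → S.Run q1 s2 q2 → q1 ∈ QS →
    ∃ q0' ∈ S.Q0, ∃ (s1' : List E) (q1' : Q) (s2' : List E) (q2' : Q),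
      S.Run q0' s1' q1' ∧ S.Run q1' s2' q2' ∧ q1' ∉ QS ∧
        S.out s1 = S.out s1' ∧ S.out s2 = S.out s2'

/-- `K`-step opacity. -/
def KSO (S : LFSA Q E A) (QS : Set Q) (K : ℕ) : Prop :=
  ∀ q0 ∈ S.Q0, ∀ (s1 : List E) (q1 : Q) (s2 : List E) (q2 : Q),
    S.Run q0 s1 q1 → S.Run q1 s2 q2 → q1 ∈ QS → (S.out s2).length ≤ K →
    ∃ q0' ∈ S.Q0, ∃ (s1' : List E) (q1' : Q) (s2' : List E) (q2' : Q),
      S.Run q0' s1' q1' ∧ S.Run q1' s2' q2' ∧ q1' ∉ QS ∧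
        S.out s1 = S.out s1' ∧ S.out s2 = S.out s2'

/-- Strong current-state opacity: the matching run is entirely non-secret. -/
def SCSO (S : LFSA Q E A) (QS : Set Q) : Prop :=
  ∀ q0 ∈ S.Q0, ∀ (s : List E) (q : Q), S.Run q0 s q → q ∈ QS →
    ∃ q0' ∈ S.Q0, ∃ (s' : List E) (q' : Q), S.RunIn QSᶜ q0' s' q' ∧ S.out s = S.out s'

/-- Strong initial-state opacity. -/
def SISO (S : LFSA Q E A) (QS : Set Q) : Prop :=
  ∀ q0 ∈ S.Q0 ∩ QS, ∀ (s : List E) (q : Q), S.Run q0 s q →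
    ∃ q0' ∈ S.Q0 \ QS, ∃ (s' : List E) (q' : Q), S.RunIn QSᶜ q0' s' q' ∧ S.out s = S.out s'

/-- Strong infinite-step opacity. -/
def SInfSO (S : LFSA Q E A) (QS : Set Q) : Prop :=
  ∀ q0 ∈ S.Q0, ∀ (s1 : List E) (q1 : Q) (s2 : List E) (q2 : Q),
    S.Run q0 s1 q1 → S.Run q1 s2 q2 → q1 ∈ QS →
    ∃ q0' ∈ S.Q0, ∃ (s1' : List E) (q1' : Q) (s2' : List E) (q2' : Q),
      S.RunIn QSᶜ q0' s1' q1' ∧ S.RunIn QSᶜ q1' s2' q2' ∧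
        S.out s1 = S.out s1' ∧ S.out s2 = S.out s2'

/-- Strong `K`-step opacity. -/
def SKSO (S : LFSA Q E A) (QS : Set Q) (K : ℕ) : Prop :=
  ∀ q0 ∈ S.Q0, ∀ (s1 : List E) (q1 : Q) (s2 : List E) (q2 : Q),
    S.Run q0 s1 q1 → S.Run q1 s2 q2 → q1 ∈ QS → (S.out s2).length ≤ K →
    ∃ q0' ∈ S.Q0, ∃ (s1' : List E) (q1' : Q) (s2' : List E) (q2' : Q),
      S.RunIn QSᶜ q0' s1' q1' ∧ S.RunIn QSᶜ q1' s2' q2' ∧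
        S.out s1 = S.out s1' ∧ S.out s2 = S.out s2'

/-- Observer step of the secret-deleted subautomaton `S_dss`. -/
def dssObsStep (S : LFSA Q E A) (QS : Set Q) : Set Q → A → Set Q :=
  (S.restrict QSᶜ).obsStep

/-- Initial observer state of the secret-deleted subautomaton. -/
def dssInit (S : LFSA Q E A) (QS : Set Q) : Set Q :=
  (S.restrict QSᶜ).UR (S.restrict QSᶜ).Q0

end LFSA

/-! A secret initial run is matched by a non-secret one with the same output iff the observer
of `S_dss`, started in `UR_dss(Q0 \ Q_S)` and fed that output, is in a nonempty state. In the
concurrent composition the right component is exactly this observer state along every run of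
`S`, so strong initial-state opacity says that this component never becomes empty. -/

namespace LFSA

variable {Q E A : Type*} {S : LFSA Q E A}

theorem Run.append {q q' q'' : Q} {s t : List E} (h : S.Run q s q') (h' : S.Run q' t q'') :
    S.Run q (s ++ t) q'' := by
  induction h with
  | nil => exact h'
  | cons hd _ ih => exact .cons hd (ih h')

theorem run_nil_iff {q q' : Q} : S.Run q [] q' ↔ q = q' :=
  ⟨fun h => by cases h; rfl, fun h => h ▸ .nil q⟩

theorem run_cons_iff {q q'' : Q} {e : E} {s : List E} :
    S.Run q (e :: s) q'' ↔ ∃ q', S.δ q e q' ∧ S.Run q' s q'' :=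
  ⟨fun h => by cases h with | cons hd tl => exact ⟨_, hd, tl⟩,
    fun ⟨_, hd, tl⟩ => .cons hd tl⟩

theorem out_append (s t : List E) : S.out (s ++ t) = S.out s ++ S.out t :=
  List.filterMap_append

theorem out_cons (e : E) (s : List E) : S.out (e :: s) = S.out [e] ++ S.out s :=
  out_append [e] s

theorem UR_UR_subset (X : Set Q) : S.UR (S.UR X) ⊆ S.UR X := by
  rintro q ⟨q1, ⟨q0, hq0, s, hs, hr⟩, t, ht, hrt⟩
  exact ⟨q0, hq0, s ++ t, by rw [out_append, hs, ht]; rfl, hr.append hrt⟩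

theorem UR_obsStep_subset (x : Set Q) (a : A) : S.UR (S.obsStep x a) ⊆ S.obsStep x a := by
  rintro q ⟨q1, ⟨q2, hq2, e, p, hle, hd, hq1⟩, t, ht, hrt⟩
  exact ⟨q2, hq2, e, p, hle, hd, UR_UR_subset {p} ⟨q1, hq1, t, ht, hrt⟩⟩

theorem mem_obsRun_of_run {x : Set Q} (hx : S.UR x ⊆ x) {q₁ q : Q} {s : List E}
    (h : S.Run q₁ s q) (hq₁ : q₁ ∈ x) : q ∈ S.obsRun x (S.out s) := by
  induction h generalizing x with
  | nil => exact hq₁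
  | @cons q₁ q' _ e s hd _ ih =>
    rw [out_cons]
    cases hle : S.lab e with
    | none =>
      have hq' : q' ∈ x := hx ⟨q₁, hq₁, [e], by simp [out, hle], .cons hd (.nil q')⟩
      simpa [out, hle] using ih hx hq'
    | some a =>
      have hq' : q' ∈ S.obsStep x a := ⟨q₁, hq₁, e, q', hle, hd, q', rfl, [], rfl, .nil q'⟩
      simpa [out, hle, obsRun] using ih (UR_obsStep_subset x a) hq'

theorem exists_run_of_mem_obsRun {x : Set Q} {q : Q} {σ : List A} (h : q ∈ S.obsRun x σ) :
    ∃ q₁ ∈ x, ∃ s : List E, S.out s = σ ∧ S.Run q₁ s q := by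
  induction σ generalizing x with
  | nil => exact ⟨q, h, [], rfl, .nil q⟩
  | cons a σ ih =>
    obtain ⟨q₁, ⟨q₂, hq₂, e, p, hle, hd, p', rfl, t, ht, hrt⟩, s, hs, hr⟩ := ih h
    refine ⟨q₂, hq₂, e :: (t ++ s), ?_, .cons hd (hrt.append hr)⟩
    rw [out_cons, out_append, ht, hs]
    simp [out, hle]

theorem mem_obsRun_UR_iff {X : Set Q} {q : Q} {σ : List A} :
    q ∈ S.obsRun (S.UR X) σ ↔ ∃ q₀ ∈ X, ∃ s : List E, S.out s = σ ∧ S.Run q₀ s q := by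
  constructor
  · intro h
    obtain ⟨q₁, ⟨q₀, hq₀, t, ht, hrt⟩, s, rfl, hr⟩ := exists_run_of_mem_obsRun h
    exact ⟨q₀, hq₀, t ++ s, by rw [out_append, ht]; rfl, hrt.append hr⟩
  · rintro ⟨q₀, hq₀, s, rfl, hr⟩
    exact mem_obsRun_of_run (UR_UR_subset X) hr ⟨q₀, hq₀, [], rfl, .nil q₀⟩

theorem runIn_iff_run_restrict {P : Set Q} {q q' : Q} {s : List E} :
    S.RunIn P q s q' ↔ q ∈ P ∧ (S.restrict P).Run q s q' := by
  constructor
  · intro h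
    induction h with
    | nil q hq => exact ⟨hq, .nil q⟩
    | cons hq hd _ ih => exact ⟨hq, .cons ⟨hd, hq, ih.1⟩ ih.2⟩
  · rintro ⟨hq, h⟩
    induction h with
    | nil q => exact .nil q hq
    | cons hd _ ih => exact .cons hq hd.1 (ih hd.2.2)

theorem CCObs_δ_iff {ostep : Set Q → A → Set Q} {x₀ : Set Q} {p p' : Q × Set Q} {e : E} :
    (S.CCObs ostep x₀).δ p e p' ↔ S.δ p.1 e p'.1 ∧ p'.2 = (S.out [e]).foldl ostep p.2 := by
  cases hle : S.lab e <;> simp [CCObs, out, hle]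

theorem run_CCObs_iff {ostep : Set Q → A → Set Q} {x₀ : Set Q} {p p' : Q × Set Q}
    {s : List E} :
    (S.CCObs ostep x₀).Run p s p' ↔ S.Run p.1 s p'.1 ∧ p'.2 = (S.out s).foldl ostep p.2 := by
  induction s generalizing p with
  | nil =>
    simp only [run_nil_iff, out, List.filterMap_nil, List.foldl_nil, Prod.ext_iff]
    exact ⟨fun ⟨h₁, h₂⟩ => ⟨h₁, h₂.symm⟩, fun ⟨h₁, h₂⟩ => ⟨h₁, h₂.symm⟩⟩
  | cons e s ih =>
    rw [out_cons, List.foldl_append]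
    simp only [run_cons_iff, CCObs_δ_iff, ih]
    constructor
    · rintro ⟨⟨qm, xm⟩, ⟨hd, rfl⟩, hr, hp⟩
      exact ⟨⟨qm, hd, hr⟩, hp⟩
    · rintro ⟨⟨qm, hd, hr⟩, hp⟩
      exact ⟨(qm, _), ⟨hd, rfl⟩, hr, hp⟩

theorem siso_iff_forall_obsRun_dssInit_nonempty {QS : Set Q} :
    S.SISO QS ↔ ∀ q₀ ∈ S.Q0 ∩ QS, ∀ (s : List E) (q : Q), S.Run q₀ s q →
      ((S.restrict QSᶜ).obsRun (S.dssInit QS) (S.out s)).Nonempty := by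
  have hdss : ∀ σ : List A, ((S.restrict QSᶜ).obsRun (S.dssInit QS) σ).Nonempty ↔
      ∃ q₀ ∈ S.Q0 \ QS, ∃ (s : List E) (q : Q), S.RunIn QSᶜ q₀ s q ∧ σ = S.out s := by
    intro σ
    simp only [dssInit, Set.Nonempty, mem_obsRun_UR_iff, runIn_iff_run_restrict]
    constructor
    · rintro ⟨q, q₀, hq₀, s, rfl, hr⟩
      exact ⟨q₀, hq₀, s, q, ⟨hq₀.2, hr⟩, rfl⟩
    · rintro ⟨q₀, hq₀, s, q, ⟨-, hr⟩, rfl⟩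
      exact ⟨q, q₀, hq₀, s, rfl, hr⟩
  simp only [SISO, hdss]

end LFSA

/-- concurrent-composition characterization of strong
initial-state opacity. -/
theorem stmt15 {Q E A : Type*} (S : LFSA Q E A) (QS : Set Q) :
    S.SISO QS ↔
      ((S.Q0.Nonempty → ¬ S.Q0 ⊆ QS) ∧
        ∀ q0 ∈ S.Q0 ∩ QS, ∀ (s : List E) (p : Q × Set Q),
          (S.CCObs (S.dssObsStep QS) (S.dssInit QS)).Run (q0, S.dssInit QS) s p →
            p.2.Nonempty) := by
  constructor
  · intro hS
    refine ⟨fun ⟨q₀, hq₀⟩ hsub => ?_, fun q₀ hq₀ s p hrun => ?_⟩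
    · obtain ⟨q₀', hq₀', -⟩ := hS q₀ ⟨hq₀, hsub hq₀⟩ [] q₀ (.nil q₀)
      exact hq₀'.2 (hsub hq₀'.1)
    · obtain ⟨hrun, hp⟩ := LFSA.run_CCObs_iff.mp hrun
      rw [hp]
      exact LFSA.siso_iff_forall_obsRun_dssInit_nonempty.mp hS q₀ hq₀ s p.1 hrun
  · rintro ⟨-, h⟩
    exact LFSA.siso_iff_forall_obsRun_dssInit_nonempty.mpr fun q₀ hq₀ s q hrun =>
      h q₀ hq₀ s (q, _) (LFSA.run_CCObs_iff.mpr ⟨hrun, rfl⟩)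
end

section
/- For any LFSA S with secret states Q_S: strong current-state opacity implies current-state opacity, strong initial-state opacity implies initial-state opacity, strong infinite-step opacity implies infinite-step opacity, and strong K-step opacity implies K-step opacity; but the converses fail in general (e.g., the four-state automaton with runs q1 →a q2 and q3 →a q4, secret states {q2,q3}, is CSO but not SCSO). -/
namespace LFSA

variable {Q E A : Type*} {S : LFSA Q E A}

theorem RunIn.run {P : Set Q} {q q' : Q} {s : List E} (h : S.RunIn P q s q') :
    S.Run q s q' := by
  induction h with
  | nil q _ => exact .nil q
  | cons _ hδ _ ih => exact .cons hδ ih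

theorem RunIn.head_mem {P : Set Q} {q q' : Q} {s : List E} (h : S.RunIn P q s q') : q ∈ P := by
  cases h with
  | nil _ hq => exact hq
  | cons hq _ _ => exact hq

theorem RunIn.last_mem {P : Set Q} {q q' : Q} {s : List E} (h : S.RunIn P q s q') :
    q' ∈ P := by
  induction h with
  | nil _ hq => exact hq
  | cons _ _ _ ih => exact ih

theorem Run.eq_nil_of_forall_not_δ {q q' : Q} {s : List E} (hdead : ∀ e p, ¬ S.δ q e p)
    (h : S.Run q s q') : s = [] ∧ q' = q := by
  cases h with
  | nil => exact ⟨rfl, rfl⟩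
  | cons hδ _ => exact (hdead _ _ hδ).elim

variable {QS : Set Q}

theorem SCSO.cso (h : S.SCSO QS) : S.CSO QS := by
  intro q0 hq0 s q hr hq
  obtain ⟨q0', hq0', s', q', hr', hout⟩ := h q0 hq0 s q hr hq
  exact ⟨q0', hq0', s', q', hr'.run, hr'.last_mem, hout⟩

theorem SISO.iso (h : S.SISO QS) : S.ISO QS := by
  intro q0 hq0 s q hr
  obtain ⟨q0', hq0', s', q', hr', hout⟩ := h q0 hq0 s q hr
  exact ⟨q0', hq0', s', q', hr'.run, hout⟩

theorem SInfSO.infSO (h : S.SInfSO QS) : S.InfSO QS := by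
  intro q0 hq0 s1 q1 s2 q2 hr1 hr2 hq1
  obtain ⟨q0', hq0', s1', q1', s2', q2', hr1', hr2', hout1, hout2⟩ :=
    h q0 hq0 s1 q1 s2 q2 hr1 hr2 hq1
  exact ⟨q0', hq0', s1', q1', s2', q2', hr1'.run, hr2'.run, hr1'.last_mem, hout1, hout2⟩

theorem SKSO.kso {K : ℕ} (h : S.SKSO QS K) : S.KSO QS K := by
  intro q0 hq0 s1 q1 s2 q2 hr1 hr2 hq1 hK
  obtain ⟨q0', hq0', s1', q1', s2', q2', hr1', hr2', hout1, hout2⟩ :=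
    h q0 hq0 s1 q1 s2 q2 hr1 hr2 hq1 hK
  exact ⟨q0', hq0', s1', q1', s2', q2', hr1'.run, hr2'.run, hr1'.last_mem, hout1, hout2⟩

end LFSA

open LFSA

/-- The paper's states `q1, q2, q3, q4` are `0, 1, 2, 3`. -/
def twoChains : LFSA (Fin 4) Unit Unit where
  δ q _ q' := (q = 0 ∧ q' = 1) ∨ (q = 2 ∧ q' = 3)
  Q0 := {0, 2}
  lab _ := some ()

theorem twoChains_run {q0 q : Fin 4} {s : List Unit} (h : twoChains.Run q0 s q) :
    (s = [] ∧ q = q0) ∨ (s = [()] ∧ ((q0 = 0 ∧ q = 1) ∨ (q0 = 2 ∧ q = 3))) := by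
  have dead : ∀ {p : Fin 4}, p = 1 ∨ p = 3 → ∀ e p', ¬ twoChains.δ p e p' := by
    rintro p (rfl | rfl) _ _ (⟨h, _⟩ | ⟨h, _⟩) <;> simp at h
  cases h with
  | nil => exact .inl ⟨rfl, rfl⟩
  | cons hδ hr =>
    rcases hδ with ⟨rfl, rfl⟩ | ⟨rfl, rfl⟩
    · obtain ⟨rfl, rfl⟩ := hr.eq_nil_of_forall_not_δ (dead (.inl rfl))
      exact .inr ⟨rfl, .inl ⟨rfl, rfl⟩⟩
    · obtain ⟨rfl, rfl⟩ := hr.eq_nil_of_forall_not_δ (dead (.inr rfl))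
      exact .inr ⟨rfl, .inr ⟨rfl, rfl⟩⟩

theorem twoChains_cso : twoChains.CSO {1, 2} := by
  intro q0 _ s q hr hq
  rcases twoChains_run hr with ⟨rfl, -⟩ | ⟨rfl, ⟨-, rfl⟩ | ⟨-, rfl⟩⟩
  · exact ⟨0, .inl rfl, [], 0, .nil 0, by decide, rfl⟩
  · exact ⟨2, .inr rfl, [()], 3, .cons (.inr ⟨rfl, rfl⟩) (.nil 3), by decide, rfl⟩
  · exact absurd hq (by decide)

/-- After observing the event, the only non-secret initial state `0` has moved to the
secret state `1`. -/
theorem not_twoChains_scso : ¬ twoChains.SCSO {1, 2} := by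
  intro h
  obtain ⟨q0, hq0, s, q, hr, hout⟩ :=
    h 0 (.inl rfl) [()] 1 (.cons (.inl ⟨rfl, rfl⟩) (.nil 1)) (.inl rfl)
  have hq0 : q0 = 0 := by
    rcases hq0 with rfl | rfl
    · rfl
    · exact absurd hr.head_mem (by decide)
  subst hq0
  cases hr with
  | nil => simp [out, twoChains] at hout
  | cons _ hδ hr =>
    rcases hδ with ⟨-, rfl⟩ | ⟨h0, -⟩
    · exact hr.head_mem (.inl rfl)
    · exact absurd h0 (by decide)

/-- the strong opacity notions imply the corresponding standard
ones, and the converses fail in general (witnessed by the four-state automaton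
with runs q1 →a q2, q3 →a q4 and secret states {q2, q3}). -/
theorem stmt19 :
    (∀ {Q E A : Type} (S : LFSA Q E A) (QS : Set Q),
      (S.SCSO QS → S.CSO QS) ∧ (S.SISO QS → S.ISO QS) ∧
      (S.SInfSO QS → S.InfSO QS) ∧ (∀ K : ℕ, S.SKSO QS K → S.KSO QS K)) ∧
    (∃ (S : LFSA (Fin 4) Unit Unit) (QS : Set (Fin 4)), S.CSO QS ∧ ¬ S.SCSO QS) :=
  ⟨fun _ _ => ⟨SCSO.cso, SISO.iso, SInfSO.infSO, fun _ => SKSO.kso⟩,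
    twoChains, {1, 2}, twoChains_cso, not_twoChains_scso⟩
end
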